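/- arXiv:1307.5600 — 2 statements merged into one kernel-verified Lean document; each statement's English description precedes it below -/
import Mathlib

section
/- Let (γ_j)_{j≥1} be a sequence of reals with 0 < γ_j ≤ 1/2 for all j, let c > 0, set ĉ = c/2, and assume ∑_{j=1}^∞ e^{−ĉ γ_j^{−2}} ≤ 1/2. Define γ_u = ∏_{j∈u} γ_j for every nonempty finite subset u of ℕ. Then ∑ over all nonempty finite subsets u of ℕ of e^{−c γ_u^{−2}} ≤ 1; in particular this sum is finite. -/
open ENNReal

private theorem tuple_tsum_pow (a : ℕ → ℝ≥0∞) (k : ℕ) :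
    ∑' f : Fin k → ℕ, ∏ i, a (f i) = (∑' j, a j) ^ k := by
  induction k with
  | zero =>
    simp
  | succ n ih =>
    rw [← ((Fin.consEquiv fun _ => ℕ)).tsum_eq]
    have h1 : ∀ c : ℕ × (Fin n → ℕ),
        ∏ i : Fin (n+1), a ((Fin.consEquiv fun _ => ℕ) c i) = a c.1 * ∏ i, a (c.2 i) := by
      intro c
      rw [Fin.prod_univ_succ]
      simp [Fin.consEquiv]
    calc ∑' c : ℕ × (Fin n → ℕ), ∏ i : Fin (n+1), a ((Fin.consEquiv fun _ => ℕ) c i)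
        = ∑' c : ℕ × (Fin n → ℕ), a c.1 * ∏ i, a (c.2 i) := tsum_congr h1
      _ = ∑' (x : ℕ) (g : Fin n → ℕ), a x * ∏ i, a (g i) :=
          ENNReal.tsum_prod (f := fun (x : ℕ) (g : Fin n → ℕ) => a x * ∏ i, a (g i))
      _ = (∑' j, a j) ^ (n + 1) := by
          simp_rw [ENNReal.tsum_mul_left, ih, ENNReal.tsum_mul_right]
          ring

private theorem sum_le_prod_of_four_le {u : Finset ℕ} (hu : u.Nonempty) (x : ℕ → ℝ)
    (hx : ∀ j, 4 ≤ x j) : ∑ j ∈ u, x j ≤ ∏ j ∈ u, x j := by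
  induction hu using Finset.Nonempty.cons_induction with
  | singleton j => simp
  | cons a s ha hs ih =>
    rw [Finset.sum_cons, Finset.prod_cons]
    have hS4 : (4:ℝ) ≤ ∑ j ∈ s, x j := by
      obtain ⟨b, hb⟩ := hs
      calc (4:ℝ) ≤ x b := hx b
        _ ≤ ∑ j ∈ s, x j := Finset.single_le_sum (fun j _ => by linarith [hx j]) hb
    have ha4 := hx a
    nlinarith [ih]

/-- if `0 < γ_j ≤ 1/2` for all `j`, `c > 0`, `ĉ = c/2` and
`∑_j e^{-ĉ γ_j^{-2}} ≤ 1/2`, then for the product weights `γ_u = ∏_{j ∈ u} γ_j` one has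
`∑_u e^{-c γ_u^{-2}} ≤ 1`, the sum over all nonempty finite subsets `u` of `ℕ`;
in particular this sum is finite. -/
theorem product_weights_exp_sum_le_one (γ : ℕ → ℝ) (hpos : ∀ j, 0 < γ j)
    (hle : ∀ j, γ j ≤ 1 / 2) (c : ℝ) (hc : 0 < c)
    (hsummable : Summable fun j : ℕ => Real.exp (-(c / 2) * ((γ j)⁻¹) ^ 2))
    (hsum : ∑' j : ℕ, Real.exp (-(c / 2) * ((γ j)⁻¹) ^ 2) ≤ 1 / 2) :
    (Summable fun u : {u : Finset ℕ // u.Nonempty} =>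
      Real.exp (-c * ((∏ j ∈ u.1, γ j)⁻¹) ^ 2)) ∧
    ∑' u : {u : Finset ℕ // u.Nonempty},
      Real.exp (-c * ((∏ j ∈ u.1, γ j)⁻¹) ^ 2) ≤ 1 := by
  set x : ℕ → ℝ := fun j => ((γ j)⁻¹) ^ 2 with hx_def
  have hx4 : ∀ j, 4 ≤ x j := by
    intro j
    have h2 : (2:ℝ) ≤ (γ j)⁻¹ := by
      rw [le_inv_comm₀ (by norm_num) (hpos j)]
      simpa using hle j
    show (4:ℝ) ≤ ((γ j)⁻¹) ^ 2
    nlinarith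
  set a : ℕ → ℝ≥0∞ := fun j => ENNReal.ofReal (Real.exp (-(c / 2) * x j)) with ha_def
  set F : {u : Finset ℕ // u.Nonempty} → ℝ := fun u =>
    Real.exp (-c * ((∏ j ∈ u.1, γ j)⁻¹) ^ 2) with hF_def
  -- the ENNReal sum of the a's is at most 1/2
  have hA : ∑' j, a j ≤ 1 / 2 := by
    rw [ha_def, ← ENNReal.ofReal_tsum_of_nonneg (fun j => (Real.exp_pos _).le) hsummable]
    calc ENNReal.ofReal (∑' j, Real.exp (-(c / 2) * x j)) ≤ ENNReal.ofReal (1/2) :=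
          ENNReal.ofReal_le_ofReal hsum
      _ = 1/2 := by rw [ENNReal.ofReal_div_of_pos (by norm_num)]; norm_num
  -- termwise bound: e^{-c γ_u^{-2}} ≤ ∏_{j∈u} a_j
  have hterm : ∀ u : {u : Finset ℕ // u.Nonempty},
      ENNReal.ofReal (F u) ≤ ∏ j ∈ u.1, a j := by
    rintro ⟨u, hu⟩
    have hprod : ((∏ j ∈ u, γ j)⁻¹) ^ 2 = ∏ j ∈ u, x j := by
      rw [← Finset.prod_inv_distrib, ← Finset.prod_pow]
    have hsumprod := sum_le_prod_of_four_le hu x hx4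
    have hP0 : (0:ℝ) ≤ ∏ j ∈ u, x j :=
      Finset.prod_nonneg fun j _ => by linarith [hx4 j]
    have hreal : Real.exp (-c * ((∏ j ∈ u, γ j)⁻¹) ^ 2)
        ≤ ∏ j ∈ u, Real.exp (-(c / 2) * x j) := by
      rw [← Real.exp_sum, ← Finset.mul_sum]
      apply Real.exp_le_exp.2
      rw [hprod]
      nlinarith
    calc ENNReal.ofReal (F ⟨u, hu⟩)
        ≤ ENNReal.ofReal (∏ j ∈ u, Real.exp (-(c / 2) * x j)) :=
          ENNReal.ofReal_le_ofReal hreal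
      _ = ∏ j ∈ u, a j :=
          ENNReal.ofReal_prod_of_nonneg fun j _ => (Real.exp_pos _).le
  -- the injection into tuples
  set ι : {u : Finset ℕ // u.Nonempty} → Σ k : ℕ, Fin (k+1) → ℕ := fun u =>
    ⟨u.1.card - 1, fun i => u.1.orderEmbOfFin
      (Nat.succ_pred_eq_of_pos (Finset.card_pos.2 u.2)).symm i⟩ with hι_def
  have hkey : ∀ u : {u : Finset ℕ // u.Nonempty},
      Finset.image ((ι u).2) Finset.univ = u.1 := by
    rintro ⟨u, hu⟩
    apply Finset.coe_injective
    rw [Finset.coe_image, Finset.coe_univ, Set.image_univ]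
    exact Finset.range_orderEmbOfFin u _
  have hιinj : Function.Injective ι := by
    intro u v h
    have := congrArg (fun w : Σ k : ℕ, Fin (k+1) → ℕ => Finset.image w.2 Finset.univ) h
    simp only [hkey u, hkey v] at this
    exact Subtype.ext this
  have hιprod : ∀ u : {u : Finset ℕ // u.Nonempty},
      ∏ j ∈ u.1, a j = ∏ i, a ((ι u).2 i) := by
    rintro ⟨u, hu⟩
    rw [← hkey ⟨u, hu⟩]
    exact Finset.prod_image fun i _ j _ hij =>
      (Finset.orderEmbOfFin u _).injective hij
  -- the ENNReal sum is at most 1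
  have hmain : ∑' u : {u : Finset ℕ // u.Nonempty}, ENNReal.ofReal (F u) ≤ 1 := by
    calc ∑' u, ENNReal.ofReal (F u)
        ≤ ∑' u : {u : Finset ℕ // u.Nonempty}, ∏ i, a ((ι u).2 i) := by
          refine ENNReal.tsum_le_tsum fun u => ?_
          rw [← hιprod u]; exact hterm u
      _ ≤ ∑' w : Σ k : ℕ, Fin (k+1) → ℕ, ∏ i, a (w.2 i) :=
          ENNReal.tsum_comp_le_tsum_of_injective hιinj _
      _ = ∑' k : ℕ, ∑' f : Fin (k+1) → ℕ, ∏ i, a (f i) :=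
          ENNReal.tsum_sigma' (f := fun w : Σ k : ℕ, Fin (k+1) → ℕ => ∏ i, a (w.2 i))
      _ = ∑' k : ℕ, (∑' j, a j) ^ (k+1) := by
          simp_rw [tuple_tsum_pow]
      _ ≤ ∑' k : ℕ, (1/2 : ℝ≥0∞) ^ (k+1) :=
          ENNReal.tsum_le_tsum fun k => pow_le_pow_left' hA _
      _ = (1/2) * ∑' k : ℕ, (1/2 : ℝ≥0∞) ^ k := by
          simp_rw [pow_succ, mul_comm, ENNReal.tsum_mul_left]
      _ = 1 := by
          rw [ENNReal.tsum_geometric]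
          rw [show (1:ℝ≥0∞) - 1/2 = 1/2 by
            rw [ENNReal.sub_eq_of_eq_add (by norm_num)]
            exact (ENNReal.add_halves 1).symm]
          rw [one_div, inv_inv]
          exact ENNReal.inv_mul_cancel two_ne_zero ENNReal.ofNat_ne_top
  have hne : ∑' u : {u : Finset ℕ // u.Nonempty}, ENNReal.ofReal (F u) ≠ ⊤ :=
    (lt_of_le_of_lt hmain ENNReal.one_lt_top).ne
  have hFsummable : Summable F := by
    have h := ENNReal.summable_toReal hne
    exact h.congr fun u => ENNReal.toReal_ofReal (Real.exp_pos _).le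
  refine ⟨hFsummable, ?_⟩
  have heq' := ENNReal.tsum_toReal_eq
    (f := fun u : {u : Finset ℕ // u.Nonempty} => ENNReal.ofReal (F u))
    (fun u => ENNReal.ofReal_ne_top)
  have heq : ∑' u, F u =
      (∑' u : {u : Finset ℕ // u.Nonempty}, ENNReal.ofReal (F u)).toReal :=
    calc ∑' u, F u = ∑' u, (ENNReal.ofReal (F u)).toReal :=
          tsum_congr fun u => (ENNReal.toReal_ofReal (Real.exp_pos _).le).symm
      _ = (∑' u : {u : Finset ℕ // u.Nonempty}, ENNReal.ofReal (F u)).toReal := heq'.symm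
  rw [heq]
  calc (∑' u : {u : Finset ℕ // u.Nonempty}, ENNReal.ofReal (F u)).toReal
      ≤ (1 : ℝ≥0∞).toReal := ENNReal.toReal_mono ENNReal.one_ne_top hmain
    _ = 1 := ENNReal.toReal_one
end

section
/- Let γ = (γ_u) be nonnegative weights indexed by the nonempty finite subsets of ℕ such that Ĉ_γ := sup over nonempty finite u ⊂ ℕ of γ_u · √(4.9 + 2 log(e·max(u)/|u|)) · √|u| is finite, where max(u) is the largest element of u. Then γ_u ≤ Ĉ_γ · |u|^{−1/2} for all u, and for every constant c with c·Ĉ_γ^{−2} ≥ 2 one has ∑ over all nonempty finite subsets u of ℕ of e^{−c γ_u^{−2}} < ∞ (terms with γ_u = 0 interpreted as 0). -/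
/-!
Part 1: `|u| ≤ max u + 1 ≤ e · max u`, so the logarithm is nonnegative and the first square root
is at least `1`.

Part 2: `c ≥ 2 Ĉ²` gives `e^{-c γ_u^{-2}} ≤ e^{-2|u| (4.9 + 2 log(e m / |u|))}` with `m = max u`,
and for `|u| = j + 1` this is `e^{-9.8 (j+1)} ((j+1) / (e m))^{4(j+1)}`. There are `C(m, j)`
sets with maximum `m` and `j + 1` elements, and `C(m, j) ((j+1)/m)^j ≤ e^{j+1}` (from
`C(m, j) ≤ m^j / j!` and `(j+1)^{j+1} / (j+1)! ≤ e^{j+1}`); as `(j+1)/m ≤ 2 < e`, each group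
contributes at most `((j+1)/m)² e^{-9.8 (j+1)}`. Summing over `j` and then over `m` leaves a
multiple of `∑ 1/m²`.
-/

open Finset Real

theorem Finset.sum_powerset_range_eq {M : Type*} [AddCommMonoid M] (f : Finset ℕ → M) (N : ℕ) :
    ∑ u ∈ (range N).powerset, f u =
      f ∅ + ∑ m ∈ range N, ∑ v ∈ (range m).powerset, f (insert m v) := by
  induction N with
  | zero => simp
  | succ N ih =>
    rw [range_add_one, sum_powerset_insert notMem_range_self, ih, sum_insert notMem_range_self,
      add_assoc, add_comm (∑ v ∈ _, _)]

theorem summable_of_summable_sum_powerset_insert {f : Finset ℕ → ℝ} (hf : 0 ≤ f)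
    (hrow : Summable fun m => ∑ v ∈ (range m).powerset, f (insert m v)) : Summable f := by
  refine summable_of_sum_le (c := f ∅ + ∑' m, ∑ v ∈ (range m).powerset, f (insert m v)) hf
    fun s => ?_
  obtain ⟨N, hN⟩ : ∃ N, s ⊆ (range N).powerset :=
    ⟨(s.sup id).sup id + 1, fun u hu => mem_powerset.2 <|
      (le_sup (f := id) hu).trans (subset_range_sup_succ _)⟩
  calc ∑ u ∈ s, f u ≤ ∑ u ∈ (range N).powerset, f u :=
        sum_le_sum_of_subset_of_nonneg hN fun u _ _ => hf u
    _ = f ∅ + ∑ m ∈ range N, ∑ v ∈ (range m).powerset, f (insert m v) :=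
        sum_powerset_range_eq f N
    _ ≤ f ∅ + ∑' m, ∑ v ∈ (range m).powerset, f (insert m v) := by
        gcongr
        exact hrow.sum_le_tsum _ fun m _ => sum_nonneg fun v _ => hf _

theorem Nat.choose_mul_div_pow_le_exp (m j : ℕ) :
    (m.choose j : ℝ) * (((j : ℝ) + 1) / m) ^ j ≤ exp ((j : ℝ) + 1) := by
  rcases Nat.eq_zero_or_pos m with rfl | hm
  · rcases Nat.eq_zero_or_pos j with rfl | hj
    · simp
    · simp [Nat.choose_eq_zero_of_lt hj, (exp_pos _).le]
  calc (m.choose j : ℝ) * (((j : ℝ) + 1) / m) ^ j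
      ≤ (m ^ j / j.factorial) * (((j : ℝ) + 1) / m) ^ j := by
        gcongr; exact Nat.choose_le_pow_div j m
    _ = ((j : ℝ) + 1) ^ (j + 1) / (j + 1).factorial := by
        rw [div_pow, Nat.factorial_succ]; push_cast; field_simp; ring
    _ ≤ exp ((j : ℝ) + 1) := pow_div_factorial_le_exp _ (by positivity) (j + 1)

noncomputable def logFactor (m k : ℕ) : ℝ := 4.9 + 2 * log (exp 1 * m / k)

theorem log_exp_one_mul_div_nonneg {m k : ℕ} (hk : k ≤ m + 1) :
    0 ≤ log (exp 1 * m / k) := by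
  rcases Nat.eq_zero_or_pos m with rfl | hm
  · simp
  rcases Nat.eq_zero_or_pos k with rfl | hk0
  · simp
  apply log_nonneg
  rw [le_div_iff₀ (by exact_mod_cast hk0), one_mul]
  have : (k : ℝ) ≤ m + 1 := by exact_mod_cast hk
  have : (1 : ℝ) ≤ m := by exact_mod_cast hm
  nlinarith [add_one_le_exp (1 : ℝ)]

theorem one_le_logFactor {m k : ℕ} (hk : k ≤ m + 1) : 1 ≤ logFactor m k := by
  unfold logFactor; linarith [log_exp_one_mul_div_nonneg hk]

theorem exp_neg_mul_logFactor {m k : ℕ} (hm : 0 < m) (hk : 0 < k) :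
    exp (-(2 * k) * logFactor m k) = exp (-9.8) ^ k * ((k / (exp 1 * m)) ^ 4) ^ k := by
  have hpos : 0 < (k : ℝ) / (exp 1 * m) := by positivity
  rw [← exp_log hpos, ← exp_nat_mul, ← exp_nat_mul, ← exp_nat_mul, ← exp_add, logFactor,
    ← inv_div, log_inv]
  ring_nf

theorem choose_mul_exp_neg_mul_logFactor_le {m j : ℕ} (hm : 0 < m) (hj : j ≤ m) :
    m.choose j * exp (-(2 * (j + 1 : ℕ)) * logFactor m (j + 1)) ≤
      (((j : ℝ) + 1) / m) ^ 2 * exp (-9.8) ^ (j + 1) := by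
  rw [exp_neg_mul_logFactor hm j.succ_pos]
  set x : ℝ := ((j : ℝ) + 1) / m with hx
  have he : 2 ≤ exp 1 := by linarith [add_one_le_exp (1 : ℝ)]
  have hx0 : 0 ≤ x := by positivity
  have hx2 : x ≤ 2 := by
    rw [hx, div_le_iff₀ (by positivity)]
    have : (j : ℝ) ≤ m := by exact_mod_cast hj
    have : (1 : ℝ) ≤ m := by exact_mod_cast hm
    linarith
  have hchoose : m.choose j * x ^ j / exp 1 ^ (j + 1) ≤ 1 := by
    rw [div_le_one (by positivity), ← exp_nat_mul]
    push_cast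
    simpa [add_comm] using Nat.choose_mul_div_pow_le_exp m j
  have hsmall : (x / exp 1) ^ (3 * j + 2) ≤ 1 :=
    pow_le_one₀ (by positivity) ((div_le_one (exp_pos 1)).2 (by linarith))
  have hbase : ((j + 1 : ℕ) : ℝ) / (exp 1 * m) = x / exp 1 := by
    rw [hx, div_div, mul_comm]; push_cast; rfl
  rw [hbase]
  clear_value x
  calc (m.choose j : ℝ) * (exp (-9.8) ^ (j + 1) * ((x / exp 1) ^ 4) ^ (j + 1))
      = (m.choose j * x ^ j / exp 1 ^ (j + 1)) * (x / exp 1) ^ (3 * j + 2) * (x ^ 2 / exp 1) *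
          exp (-9.8) ^ (j + 1) := by
        simp only [div_pow, ← pow_mul]
        field_simp
        ring
    _ ≤ 1 * 1 * x ^ 2 * exp (-9.8) ^ (j + 1) := by
        gcongr
        exact div_le_self (by positivity) (by linarith)
    _ = x ^ 2 * exp (-9.8) ^ (j + 1) := by ring

noncomputable def majorant (u : Finset ℕ) : ℝ := exp (-(2 * u.card) * logFactor (u.sup id) u.card)

theorem majorant_nonneg (u : Finset ℕ) : 0 ≤ majorant u := (exp_pos _).le

theorem majorant_insert {m : ℕ} {v : Finset ℕ} (hv : v ⊆ range m) :
    majorant (insert m v) = exp (-(2 * (v.card + 1 : ℕ)) * logFactor m (v.card + 1)) := by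
  have hm : m ∉ v := fun h => notMem_range_self (hv h)
  have hsup : (insert m v).sup id = m :=
    sup_insert.trans (sup_eq_left.2 (Finset.sup_le fun x hx => (mem_range.1 (hv hx)).le))
  rw [majorant, hsup, card_insert_of_notMem hm]

theorem sum_powerset_majorant_insert_le {m : ℕ} (hm : 0 < m) :
    ∑ v ∈ (range m).powerset, majorant (insert m v) ≤
      (∑' n : ℕ, (n : ℝ) ^ 2 * exp (-9.8) ^ n) / m ^ 2 := by
  have hg : Summable fun n : ℕ => (n : ℝ) ^ 2 * exp (-9.8) ^ n :=
    summable_pow_mul_geometric_of_norm_lt_one 2 (by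
      rw [Real.norm_of_nonneg (exp_pos _).le, exp_lt_one_iff]; norm_num)
  rw [sum_congr rfl fun v hv => majorant_insert (mem_powerset.1 hv),
    sum_powerset_apply_card (fun k => exp (-(2 * (k + 1 : ℕ)) * logFactor m (k + 1))),
    card_range]
  calc ∑ j ∈ range (m + 1), m.choose j • exp (-(2 * (j + 1 : ℕ)) * logFactor m (j + 1))
      ≤ ∑ j ∈ range (m + 1), (((j : ℝ) + 1) / m) ^ 2 * exp (-9.8) ^ (j + 1) := by
        gcongr with j hj
        rw [nsmul_eq_mul]
        exact choose_mul_exp_neg_mul_logFactor_le hm (Nat.lt_succ_iff.1 (mem_range.1 hj))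
    _ = (∑ n ∈ range (m + 2), (n : ℝ) ^ 2 * exp (-9.8) ^ n) / m ^ 2 := by
        rw [sum_range_succ' _ (m + 1)]
        simp [sum_div, div_pow, div_mul_eq_mul_div]
    _ ≤ (∑' n : ℕ, (n : ℝ) ^ 2 * exp (-9.8) ^ n) / m ^ 2 := by
        gcongr
        exact hg.sum_le_tsum _ fun n _ => by positivity

theorem summable_majorant : Summable majorant := by
  refine summable_of_summable_sum_powerset_insert majorant_nonneg ?_
  refine ((summable_nat_pow_inv.2 one_lt_two).mul_left
    (∑' n : ℕ, (n : ℝ) ^ 2 * exp (-9.8) ^ n)).of_norm_bounded_eventually ?_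
  filter_upwards [Filter.eventually_cofinite_ne 0] with m hm
  rw [Real.norm_of_nonneg (sum_nonneg fun v _ => majorant_nonneg _), ← div_eq_mul_inv]
  exact sum_powerset_majorant_insert_le (Nat.pos_of_ne_zero hm)

theorem Finset.card_le_max'_add_one {u : Finset ℕ} (hu : u.Nonempty) : u.card ≤ u.max' hu + 1 := by
  simpa using card_le_card fun x hx => mem_range.2 (Nat.lt_succ_of_le (le_max' u x hx))

theorem le_div_sqrt_of_mul_sqrt_mul_sqrt_le {γ C k L : ℝ} (hγ : 0 ≤ γ) (hk : 0 < k) (hL : 1 ≤ L)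
    (hbound : γ * √L * √k ≤ C) : γ ≤ C / √k := by
  rw [le_div_iff₀ (sqrt_pos.2 hk)]
  calc γ * √k = γ * 1 * √k := by rw [mul_one]
    _ ≤ γ * √L * √k := by gcongr; exact one_le_sqrt.2 hL
    _ ≤ C := hbound

theorem exp_neg_mul_inv_sq_le {γ C c k L : ℝ} (hγ : 0 < γ) (hk : 0 ≤ k) (hL : 0 ≤ L)
    (hbound : γ * √L * √k ≤ C) (hc : 2 * C ^ 2 ≤ c) :
    exp (-c * γ⁻¹ ^ 2) ≤ exp (-(2 * k) * L) := by
  have hsq : γ ^ 2 * (k * L) ≤ C ^ 2 := by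
    calc γ ^ 2 * (k * L) = (γ * √L * √k) ^ 2 := by
          rw [mul_pow, mul_pow, sq_sqrt hL, sq_sqrt hk]; ring
      _ ≤ C ^ 2 := pow_le_pow_left₀ (by positivity) hbound 2
  have hkL : k * L ≤ C ^ 2 * γ⁻¹ ^ 2 := by
    rw [inv_pow, ← div_eq_mul_inv, le_div_iff₀ (by positivity)]; linarith
  rw [exp_le_exp]
  nlinarith [inv_pos.2 (pow_pos hγ 2), inv_pow γ 2]

/-- if the nonnegative weights `(γ_u)`, indexed by the nonempty finite
subsets of `ℕ`, satisfy `Ĉ_γ := sup_u γ_u √(4.9 + 2 log(e max(u)/|u|)) √|u| < ∞`, then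
`γ_u ≤ Ĉ_γ |u|^{-1/2}` for all `u`, and for every `c` with `c Ĉ_γ^{-2} ≥ 2` the sum
`∑_u e^{-c γ_u^{-2}}` (terms with `γ_u = 0` interpreted as `0`) is finite. -/
theorem weights_bound_and_exp_summable (γ : Finset ℕ → ℝ)
    (hγ : ∀ u : Finset ℕ, 0 ≤ γ u) (C : ℝ)
    (hC : ∀ (u : Finset ℕ) (hu : u.Nonempty),
      γ u * Real.sqrt (4.9 + 2 * Real.log (Real.exp 1 * (u.max' hu) / u.card)) *
        Real.sqrt u.card ≤ C) :
    (∀ u : Finset ℕ, u.Nonempty → γ u ≤ C / Real.sqrt u.card) ∧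
    ∀ c : ℝ, 2 ≤ c * (C⁻¹) ^ 2 →
      Summable fun u : {u : Finset ℕ // u.Nonempty} =>
        if γ u.1 = 0 then 0 else Real.exp (-c * ((γ u.1)⁻¹) ^ 2) := by
  replace hC : ∀ u (hu : u.Nonempty), γ u * √(logFactor (u.max' hu) u.card) * √u.card ≤ C := hC
  have hL (u : Finset ℕ) (hu : u.Nonempty) : 1 ≤ logFactor (u.max' hu) u.card :=
    one_le_logFactor (card_le_max'_add_one hu)
  refine ⟨fun u hu => le_div_sqrt_of_mul_sqrt_mul_sqrt_le (hγ u) (by simpa using hu) (hL u hu)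
    (hC u hu), fun c hc => ?_⟩
  have hC0 : C ≠ 0 := by rintro rfl; norm_num at hc
  have hcC : 2 * C ^ 2 ≤ c := by
    rw [inv_pow, ← div_eq_mul_inv, le_div_iff₀ (by positivity)] at hc; linarith
  refine (summable_majorant.subtype _).of_nonneg_of_le (fun u => ?_) fun ⟨u, hu⟩ => ?_
  · split_ifs <;> positivity
  dsimp only
  split_ifs with h
  · exact majorant_nonneg u
  rw [Function.comp_apply, majorant, ← sup'_eq_sup hu, ← max'_eq_sup']
  exact exp_neg_mul_inv_sq_le ((hγ u).lt_of_ne' h) (Nat.cast_nonneg _)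
    (zero_le_one.trans (hL u hu)) (hC u hu) hcC
end
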